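/- Let G be a connected chordal claw-free graph with clique tree T_G, rooted at a leaf R of T_G. Let A be a max clique of G that is not a fork clique, and let v ∈ A. Suppose there exists a max clique D of G with v ∈ D, D ≠ A, and A not a proper descendant of D in T_G^R. Then there exists exactly one max clique C of G with v ∈ C such that C is a child of A in T_G^R, or C and A are the two children of a common parent in T_G^R that is a fork clique. -/

import Mathlib

open SimpleGraph

/-- A graph is *chordal* if every cycle of length at least 4 has a chord, i.e. an
edge of the graph joining two vertices of the cycle that is not an edge of the cycle. -/
def IsChordal {V : Type*} (G : SimpleGraph V) : Prop :=
  ∀ (v : V) (c : G.Walk v v), c.IsCycle → 4 ≤ c.length →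
    ∃ u w : V, u ∈ c.support ∧ w ∈ c.support ∧ G.Adj u w ∧ s(u, w) ∉ c.edges

/-- A graph is *claw-free* if it has no induced subgraph isomorphic to the
complete bipartite graph `K_{1,3}`. -/
def ClawFree {V : Type*} (G : SimpleGraph V) : Prop :=
  IsEmpty (completeBipartiteGraph (Fin 1) (Fin 3) ↪g G)

/-- A *max clique* of `G` is a maximal clique. -/
def IsMaximalClique {V : Type*} (G : SimpleGraph V) (s : Set V) : Prop :=
  G.IsClique s ∧ ∀ t : Set V, G.IsClique t → s ⊆ t → s = t

/-- The type of max cliques of `G`. -/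
abbrev MaxClique {V : Type*} (G : SimpleGraph V) : Type _ :=
  {s : Set V // IsMaximalClique G s}

/-- `M_v`: the set of max cliques of `G` containing the vertex `v`. -/
def cliquesOf {V : Type*} (G : SimpleGraph V) (v : V) : Set (MaxClique G) :=
  {A | v ∈ A.1}

/-- A *clique tree* of `G`: a tree whose vertices are the max cliques of `G` such
that for every vertex `v` of `G` the subgraph induced by `M_v` is connected. -/
structure IsCliqueTree {V : Type*} (G : SimpleGraph V)
    (T : SimpleGraph (MaxClique G)) : Prop where
  isTree : T.IsTree
  induced_connected : ∀ v : V, (T.induce (cliquesOf G v)).Connected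

/-- The subgraph of `T` induced by `S` is a path in `T`: there is a path of `T`
whose vertices are exactly `S` and whose edges are exactly the edges of `T`
between vertices of `S`. -/
def InducedPath {M : Type*} (T : SimpleGraph M) (S : Set M) : Prop :=
  ∃ (a b : M) (p : T.Walk a b), p.IsPath ∧ (∀ A, A ∈ p.support ↔ A ∈ S) ∧
    ∀ A B, A ∈ S → B ∈ S → (T.Adj A B ↔ s(A, B) ∈ p.edges)

/-- `B` is a *star clique*: every vertex of `B` is contained in at most one
neighbor of `B` in the clique tree `T`. -/
def IsStarClique {V : Type*} (G : SimpleGraph V) (T : SimpleGraph (MaxClique G))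
    (B : MaxClique G) : Prop :=
  ∀ v ∈ B.1, ∀ A A' : MaxClique G, T.Adj B A → T.Adj B A' →
    v ∈ A.1 → v ∈ A'.1 → A = A'

/-- `B` is a *fork clique*: `B` has degree 3 in the clique tree `T`, for every
vertex `v ∈ B` there are two distinct neighbors `A, A'` of `B` with
`M_v = {B, A, A'}`, and for all distinct neighbors `A, A'` of `B` there is a
vertex `v` with `M_v = {B, A, A'}`. -/
def IsForkClique {V : Type*} (G : SimpleGraph V) (T : SimpleGraph (MaxClique G))
    (B : MaxClique G) : Prop :=
  (T.neighborSet B).ncard = 3 ∧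
  (∀ v ∈ B.1, ∃ A A' : MaxClique G, A ≠ A' ∧ T.Adj B A ∧ T.Adj B A' ∧
      cliquesOf G v = {B, A, A'}) ∧
  ∀ A A' : MaxClique G, T.Adj B A → T.Adj B A' → A ≠ A' →
      ∃ v : V, cliquesOf G v = {B, A, A'}

/-- The paths `T[S₁]` and `T[S₂]` *fork in `A`*: there is a fork
`(A', A, {A_P, A_Q})`, i.e. `A', A, A_P` are consecutive vertices of the path
`T[S₁]`, `A', A, A_Q` are consecutive vertices of the path `T[S₂]`,
`A_P` does not occur in `T[S₂]` and `A_Q` does not occur in `T[S₁]`. -/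
def ForkAt {M : Type*} (T : SimpleGraph M) (S₁ S₂ : Set M) (A : M) : Prop :=
  ∃ A' AP AQ : M, A' ∈ S₁ ∧ A' ∈ S₂ ∧ A ∈ S₁ ∧ A ∈ S₂ ∧ AP ∈ S₁ ∧ AQ ∈ S₂ ∧
    T.Adj A' A ∧ T.Adj A AP ∧ T.Adj A AQ ∧ A' ≠ AP ∧ A' ≠ AQ ∧ AP ∉ S₂ ∧ AQ ∉ S₁

/-- `A₁, A₂, A₃` form a *fork triangle* around `B`. -/
def FormsForkTriangle {V : Type*} (G : SimpleGraph V) (T : SimpleGraph (MaxClique G))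
    (A₁ A₂ A₃ B : MaxClique G) : Prop :=
  A₁ ≠ A₂ ∧ A₁ ≠ A₃ ∧ A₂ ≠ A₃ ∧ T.Adj B A₁ ∧ T.Adj B A₂ ∧ T.Adj B A₃ ∧
  (∃ u : V, cliquesOf G u = {A₁, B, A₂}) ∧
  (∃ v : V, cliquesOf G v = {A₂, B, A₃}) ∧
  (∃ w : V, cliquesOf G w = {A₃, B, A₁})

/-- `B` has a fork triangle. -/
def HasForkTriangle {V : Type*} (G : SimpleGraph V) (T : SimpleGraph (MaxClique G))
    (B : MaxClique G) : Prop :=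
  ∃ A₁ A₂ A₃ : MaxClique G, FormsForkTriangle G T A₁ A₂ A₃ B

/-- In the tree `T` rooted at `R`, `B` is an ancestor of `A` (equivalently, `A` is
a descendant of `B`): `B` lies on the unique path from `R` to `A`.  Every vertex
is an ancestor/descendant of itself. -/
def IsAncestor {M : Type*} (T : SimpleGraph M) (R A B : M) : Prop :=
  ∀ p : T.Walk R A, p.IsPath → B ∈ p.support

/-- In the tree `T` rooted at `R`, `A` is a child of `P`. -/
def IsChildOf {M : Type*} (T : SimpleGraph M) (R A P : M) : Prop :=
  T.Adj P A ∧ IsAncestor T R A P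

/-- `R` is a leaf of `T`: it has exactly one neighbor. -/
def IsLeaf {M : Type*} (T : SimpleGraph M) (R : M) : Prop :=
  (T.neighborSet R).ncard = 1

/-- The triple `(v₁, v₂, v₃)` *spans* the max clique `A`: `A` is the only max
clique of `G` containing `v₁`, `v₂` and `v₃`. -/
def Spans {V : Type*} (G : SimpleGraph V) (v₁ v₂ v₃ : V) (A : Set V) : Prop :=
  IsMaximalClique G A ∧ v₁ ∈ A ∧ v₂ ∈ A ∧ v₃ ∈ A ∧
    ∀ B : Set V, IsMaximalClique G B → v₁ ∈ B → v₂ ∈ B → v₃ ∈ B → B = A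

/- ===================== auxiliary lemmas ===================== -/

section Aux

open SimpleGraph Walk

variable {V : Type*} {G : SimpleGraph V}

/-! ### basic facts about maximal cliques -/

lemma maxclique_eq_of_subset {A B : MaxClique G} (h : A.1 ⊆ B.1) : A = B :=
  Subtype.ext (A.2.2 B.1 B.2.1 h)

lemma maxclique_diff_nonempty {A B : MaxClique G} (h : A ≠ B) : (A.1 \ B.1).Nonempty := by
  rcases Set.not_subset.1 (fun hsub => h (maxclique_eq_of_subset hsub)) with ⟨x, hx, hx'⟩
  exact ⟨x, hx, hx'⟩

lemma maxclique_nonempty [Nonempty V] (A : MaxClique G) : A.1.Nonempty := by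
  by_contra h
  rw [Set.not_nonempty_iff_eq_empty] at h
  obtain ⟨x⟩ := ‹Nonempty V›
  have hx : A.1 = {x} := A.2.2 {x} (Set.pairwise_singleton x G.Adj) (by simp [h])
  rw [h] at hx
  exact (Set.singleton_ne_empty x) hx.symm

lemma exists_maxclique_supset [Finite V] {s : Set V} (hs : G.IsClique s) :
    ∃ A : MaxClique G, s ⊆ A.1 := by
  classical
  obtain ⟨t, ⟨ht, hst⟩, hmax⟩ := Set.Finite.exists_maximalFor (id : Set V → Set V)
    {t | G.IsClique t ∧ s ⊆ t} (Set.toFinite _) ⟨s, hs, subset_rfl⟩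
  exact ⟨⟨t, ht, fun r hr htr => subset_antisymm htr (hmax ⟨hr, hst.trans htr⟩ htr)⟩, hst⟩

lemma mem_maxclique [Finite V] (x : V) : ∃ A : MaxClique G, x ∈ A.1 := by
  obtain ⟨A, hA⟩ := exists_maxclique_supset (G := G) (s := {x}) (Set.pairwise_singleton x G.Adj)
  exact ⟨A, hA rfl⟩

lemma adj_common_maxclique [Finite V] {x y : V} (h : G.Adj x y) :
    ∃ C : MaxClique G, x ∈ C.1 ∧ y ∈ C.1 := by
  obtain ⟨A, hA⟩ := exists_maxclique_supset (G := G) (s := {x, y})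
    (SimpleGraph.isClique_pair.2 fun _ => h)
  exact ⟨A, hA (by simp), hA (by simp)⟩

/-! ### generic facts about trees and paths -/

variable {M : Type*} {T : SimpleGraph M}

/-- `K` lies on every path from `X` to `Y`. -/
def OnPath (T : SimpleGraph M) (K X Y : M) : Prop :=
  ∀ p : T.Walk X Y, p.IsPath → K ∈ p.support

lemma exists_tpath (hM : T.IsTree) (X Y : M) : ∃ p : T.Walk X Y, p.IsPath :=
  (hM.existsUnique_path X Y).exists

lemma tpath_eq (hM : T.IsTree) {X Y : M} {p q : T.Walk X Y} (hp : p.IsPath) (hq : q.IsPath) :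
    p = q := by
  obtain ⟨r, -, hr⟩ := hM.existsUnique_path X Y
  rw [hr p hp, hr q hq]

lemma onPath_of_mem (hM : T.IsTree) {K X Y : M} {p : T.Walk X Y} (hp : p.IsPath)
    (hK : K ∈ p.support) : OnPath T K X Y := fun q hq => by
  rwa [tpath_eq hM hq hp]

lemma onPath_start {X Y : M} : OnPath T X X Y := fun p _ => p.start_mem_support

lemma onPath_symm {K X Y : M} (h : OnPath T K X Y) : OnPath T K Y X := fun p hp => by
  have := h p.reverse hp.reverse
  rwa [Walk.support_reverse, List.mem_reverse] at this

lemma endpoint_eq_of_mem_takeUntil [DecidableEq M] {X Y Z : M} {w : T.Walk X Y} (hw : w.IsPath)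
    (hZ : Z ∈ w.support) (hY : Y ∈ (w.takeUntil Z hZ).support) : Y = Z := by
  by_contra hne
  have hnd := hw.support_nodup
  rw [← Walk.take_spec w hZ, Walk.support_append, List.nodup_append] at hnd
  have hY2 : Y ∈ (w.dropUntil Z hZ).support := Walk.end_mem_support _
  rw [Walk.support_eq_cons] at hY2
  rcases List.mem_cons.1 hY2 with h | h
  · exact hne h
  · exact hnd.2.2 Y hY Y h rfl

lemma concat_isPath' {X Y Z : M} {p : T.Walk X Y} (hp : p.IsPath) (h : T.Adj Y Z)
    (hZ : Z ∉ p.support) : (p.concat h).IsPath := by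
  rw [← Walk.isPath_reverse_iff, Walk.reverse_concat]
  exact (Walk.cons_isPath_iff _ _).2 ⟨hp.reverse, by rwa [Walk.support_reverse, List.mem_reverse]⟩

lemma onPath_trans (hM : T.IsTree) {K K' X C : M} (hadj : T.Adj K K') (h1 : OnPath T K X K')
    (h2 : OnPath T K' K C) : OnPath T K' X C := by
  classical
  intro p hp
  by_contra hK'
  by_cases hK : K ∈ p.support
  · exact hK' (Walk.support_dropUntil_subset p hK (h2 (p.dropUntil K hK) (hp.dropUntil hK)))
  · obtain ⟨r, hr⟩ := exists_tpath hM C K'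
    have hKmem : K ∈ (p.append r).bypass.support := h1 _ (Walk.bypass_isPath _)
    have hKmem' : K ∈ (p.append r).support := Walk.support_bypass_subset _ hKmem
    rw [Walk.mem_support_append_iff] at hKmem'
    rcases hKmem' with h | h
    · exact hK h
    · have hK'mem : K' ∈ ((r.takeUntil K h).reverse).support := h2 _ (hr.takeUntil h).reverse
      rw [Walk.support_reverse, List.mem_reverse] at hK'mem
      exact hadj.ne' (endpoint_eq_of_mem_takeUntil hr h hK'mem)

lemma onPath_dichot (hM : T.IsTree) {K K' : M} (hadj : T.Adj K K') (C : M) :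
    OnPath T K' K C ∨ OnPath T K K' C := by
  classical
  obtain ⟨p, hp⟩ := exists_tpath hM K C
  by_cases h : K' ∈ p.support
  · exact Or.inl (onPath_of_mem hM hp h)
  · refine Or.inr (onPath_of_mem hM (p := Walk.cons hadj.symm p)
      ((Walk.cons_isPath_iff _ _).2 ⟨hp, h⟩) ?_)
    rw [Walk.support_cons]
    exact List.mem_cons_of_mem _ p.start_mem_support

lemma isPath_pair {a b : M} (h : T.Adj a b) : (Walk.cons h Walk.nil).IsPath := by
  simp [Walk.cons_isPath_iff, h.ne]

lemma isPath_triple {a b c : M} (h1 : T.Adj a b) (h2 : T.Adj b c) (hac : a ≠ c) :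
    (Walk.cons h1 (Walk.cons h2 Walk.nil)).IsPath := by
  simp [Walk.cons_isPath_iff, h1.ne, h2.ne, hac]

lemma isPath_quad {a b c d : M} (h1 : T.Adj a b) (h2 : T.Adj b c) (h3 : T.Adj c d)
    (hac : a ≠ c) (had : a ≠ d) (hbd : b ≠ d) :
    (Walk.cons h1 (Walk.cons h2 (Walk.cons h3 Walk.nil))).IsPath := by
  simp [Walk.cons_isPath_iff, h1.ne, h2.ne, h3.ne, hac, had, hbd]

lemma tree_no_triangle (hM : T.IsTree) {a b c : M} (hab : T.Adj a b) (hbc : T.Adj b c)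
    (hac : T.Adj a c) : False := by
  have h1 : (Walk.cons hac Walk.nil : T.Walk a c).IsPath := isPath_pair hac
  have h2 := isPath_triple hab hbc hac.ne
  have := congrArg Walk.length (tpath_eq hM h1 h2)
  simp at this

/-! ### rooted-tree (ancestor) facts -/

lemma isAncestor_antisymm (hM : T.IsTree) {R A B : M} (h1 : IsAncestor T R A B)
    (h2 : IsAncestor T R B A) : A = B := by
  classical
  obtain ⟨p, hp⟩ := exists_tpath hM R A
  have hB : B ∈ p.support := h1 p hp
  exact endpoint_eq_of_mem_takeUntil hp hB (h2 _ (hp.takeUntil hB))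

lemma isAncestor_trans (hM : T.IsTree) {R A P X : M} (h1 : IsAncestor T R A P)
    (h2 : IsAncestor T R P X) : IsAncestor T R A X := by
  classical
  intro p hp
  have hP : P ∈ p.support := h1 p hp
  exact Walk.support_takeUntil_subset _ hP (h2 _ (hp.takeUntil hP))

lemma adj_dichot (hM : T.IsTree) {P C : M} (R : M) (hadj : T.Adj P C) :
    IsAncestor T R C P ∨ IsAncestor T R P C := by
  classical
  obtain ⟨p, hp⟩ := exists_tpath hM R C
  by_cases h : P ∈ p.support
  · exact Or.inl (onPath_of_mem hM hp h)
  · refine Or.inr (onPath_of_mem hM (concat_isPath' hp hadj.symm h) ?_)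
    rw [Walk.support_concat]
    exact List.mem_append.2 (Or.inl p.end_mem_support)

lemma exists_parent (hM : T.IsTree) {R A : M} (hne : A ≠ R) : ∃ Q, IsChildOf T R A Q := by
  obtain ⟨p, hp⟩ := exists_tpath hM R A
  obtain ⟨Q, h, w, hrev⟩ := Walk.exists_eq_cons_of_ne hne p.reverse
  refine ⟨Q, h.symm, ?_⟩
  have hQ : Q ∈ p.support := by
    have : Q ∈ p.reverse.support := by
      rw [hrev, Walk.support_cons]
      exact List.mem_cons_of_mem _ w.start_mem_support
    rwa [Walk.support_reverse, List.mem_reverse] at this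
  exact onPath_of_mem hM hp hQ

lemma parent_unique (hM : T.IsTree) {R A P₁ P₂ : M} (h1 : IsChildOf T R A P₁)
    (h2 : IsChildOf T R A P₂) : P₁ = P₂ := by
  classical
  have hAR : A ≠ R := by
    rintro rfl
    have := h1.2 Walk.nil (by simp)
    simp only [Walk.support_nil, List.mem_singleton] at this
    exact h1.1.ne' this.symm
  obtain ⟨p1, hp1⟩ := exists_tpath hM R P₁
  obtain ⟨p2, hp2⟩ := exists_tpath hM R P₂
  have hA1 : A ∉ p1.support := by
    intro hA
    exact h1.1.ne (endpoint_eq_of_mem_takeUntil hp1 hA (h1.2 _ (hp1.takeUntil hA)))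
  have hA2 : A ∉ p2.support := by
    intro hA
    exact h2.1.ne (endpoint_eq_of_mem_takeUntil hp2 hA (h2.2 _ (hp2.takeUntil hA)))
  have heq := tpath_eq hM (concat_isPath' hp1 h1.1 hA1) (concat_isPath' hp2 h2.1 hA2)
  obtain ⟨hv, -⟩ := Walk.concat_inj heq
  exact hv

end Aux

section Aux2

open SimpleGraph Walk

variable {V : Type*} {G : SimpleGraph V} {T : SimpleGraph (MaxClique G)}

/-- Every max clique on a path between two max cliques containing `v` contains `v`. -/
lemma mem_of_mem_path (hT : IsCliqueTree G T) {v : V} {A B : MaxClique G}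
    (hvA : v ∈ A.1) (hvB : v ∈ B.1) {p : T.Walk A B} (hp : p.IsPath) :
    ∀ X ∈ p.support, v ∈ X.1 := by
  classical
  obtain ⟨w⟩ := (hT.induced_connected v).preconnected ⟨A, hvA⟩ ⟨B, hvB⟩
  let w' := w.map (SimpleGraph.Embedding.induce (cliquesOf G v)).toHom
  have hsupp : ∀ X ∈ w'.support, v ∈ X.1 := by
    intro X hX
    rw [Walk.support_map, List.mem_map] at hX
    obtain ⟨⟨Y, hY⟩, -, rfl⟩ := hX
    exact hY
  have hpe : p = w'.bypass := tpath_eq hT.isTree hp (Walk.bypass_isPath _)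
  intro X hX
  exact hsupp X (Walk.support_bypass_subset _ (hpe ▸ hX))

lemma mem_of_onPath (hT : IsCliqueTree G T) {v : V} {A B K : MaxClique G}
    (hvA : v ∈ A.1) (hvB : v ∈ B.1) (h : OnPath T K A B) : v ∈ K.1 := by
  obtain ⟨p, hp⟩ := exists_tpath hT.isTree A B
  exact mem_of_mem_path hT hvA hvB hp K (h p hp)

/-- A vertex in two distinct neighbors of `B` lies in `B`. -/
lemma mem_mid (hT : IsCliqueTree G T) {B X Y : MaxClique G}
    (hX : T.Adj B X) (hY : T.Adj B Y) (hXY : X ≠ Y) {t : V} (ht1 : t ∈ X.1) (ht2 : t ∈ Y.1) :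
    t ∈ B.1 := by
  have hp := isPath_triple hX.symm hY hXY
  exact mem_of_mem_path hT ht1 ht2 hp B (by simp)

/-- The separation lemma: `x` and `y` on "opposite sides" of a tree edge are non-adjacent. -/
lemma sep_nonadj [Finite V] (hT : IsCliqueTree G T) {K K' Mx My : MaxClique G} {x y : V}
    (hKK' : T.Adj K K') (hx : x ∈ Mx.1) (hy : y ∈ My.1) (hxK' : x ∉ K'.1) (hyK : y ∉ K.1)
    (hMx : OnPath T K Mx K') (hMy : OnPath T K' My K) : ¬ G.Adj x y := by
  intro hadj
  obtain ⟨C, hxC, hyC⟩ := adj_common_maxclique hadj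
  rcases onPath_dichot hT.isTree hKK' C with h | h
  · exact hxK' (mem_of_onPath hT hx hxC (onPath_trans hT.isTree hKK' hMx h))
  · exact hyK (mem_of_onPath hT hy hyC (onPath_trans hT.isTree hKK'.symm hMy h))

/-- From a claw configuration we get a contradiction with claw-freeness. -/
lemma no_claw (hcf : ClawFree G) {c x y z : V} (hcx : G.Adj c x) (hcy : G.Adj c y)
    (hcz : G.Adj c z) (hxy : ¬ G.Adj x y) (hxz : ¬ G.Adj x z) (hyz : ¬ G.Adj y z)
    (hxy' : x ≠ y) (hxz' : x ≠ z) (hyz' : y ≠ z) : False := by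
  classical
  let w : Fin 3 → V := ![x, y, z]
  have hadjw : ∀ i : Fin 3, G.Adj c (w i) := by
    intro i
    fin_cases i <;> simp [w] <;> assumption
  have hnadj : ∀ i j : Fin 3, ¬ G.Adj (w i) (w j) := by
    intro i j
    fin_cases i <;> fin_cases j <;> simp [w] <;>
      first
        | assumption
        | (intro hh; exact hxy hh.symm)
        | (intro hh; exact hxz hh.symm)
        | (intro hh; exact hyz hh.symm)
  have hwne : ∀ i j : Fin 3, w i = w j → i = j := by
    intro i j
    fin_cases i <;> fin_cases j <;> simp [w] <;> intro hh <;>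
      first
        | exact absurd hh hxy'
        | exact absurd hh hxz'
        | exact absurd hh hyz'
        | exact absurd hh.symm hxy'
        | exact absurd hh.symm hxz'
        | exact absurd hh.symm hyz'
  refine hcf.elim ⟨⟨Sum.elim (fun _ => c) w, ?_⟩, ?_⟩
  · rintro (i | i) (j | j) hij
    · exact congrArg _ (Subsingleton.elim i j)
    · exact absurd hij (hadjw j).ne
    · exact absurd hij (hadjw i).ne'
    · exact congrArg _ (hwne i j hij)
  · rintro (i | i) (j | j)
    · exact iff_of_false (G.loopless.irrefl c) (by simp [completeBipartiteGraph])
    · exact iff_of_true (hadjw j) (by simp [completeBipartiteGraph])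
    · exact iff_of_true (hadjw i).symm (by simp [completeBipartiteGraph])
    · exact iff_of_false (hnadj i j) (by simp [completeBipartiteGraph])

/-- Adjacent max cliques in a clique tree of a connected graph intersect. -/
lemma adj_inter_nonempty [Finite V] [Nonempty V] (hconn : G.Connected)
    (hT : IsCliqueTree G T) {B A' : MaxClique G} (h : T.Adj B A') :
    ∃ w, w ∈ B.1 ∧ w ∈ A'.1 := by
  have hM := hT.isTree
  by_contra hemp
  push_neg at hemp
  have hFG : ∀ x : V, ¬((∃ Mx : MaxClique G, x ∈ Mx.1 ∧ OnPath T B Mx A') ∧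
      (∃ Mx : MaxClique G, x ∈ Mx.1 ∧ OnPath T A' Mx B)) := by
    rintro x ⟨⟨M1, hx1, h1⟩, ⟨M2, hx2, h2⟩⟩
    have hxA : x ∈ A'.1 := mem_of_onPath hT hx1 hx2 (onPath_trans hM h h1 (onPath_symm h2))
    have hxB : x ∈ B.1 := mem_of_onPath hT hx2 hx1 (onPath_trans hM h.symm h2 (onPath_symm h1))
    exact hemp x hxB hxA
  have hstep : ∀ x y : V, G.Adj x y →
      (∃ Mx : MaxClique G, x ∈ Mx.1 ∧ OnPath T B Mx A') →
      (∃ Mx : MaxClique G, y ∈ Mx.1 ∧ OnPath T B Mx A') := by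
    intro x y hadj hx
    obtain ⟨C, hxC, hyC⟩ := adj_common_maxclique hadj
    rcases onPath_dichot hM h C with hd | hd
    · exact absurd ⟨hx, ⟨C, hxC, onPath_symm hd⟩⟩ (hFG x)
    · exact ⟨C, hyC, onPath_symm hd⟩
  have hwalk : ∀ (x y : V) (_ : G.Walk x y),
      (∃ Mx : MaxClique G, x ∈ Mx.1 ∧ OnPath T B Mx A') →
      (∃ Mx : MaxClique G, y ∈ Mx.1 ∧ OnPath T B Mx A') := by
    intro x y w
    induction w with
    | nil => exact id
    | cons hadj _ ih => exact fun hF => ih (hstep _ _ hadj hF)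
  obtain ⟨b, hb⟩ := maxclique_nonempty B
  obtain ⟨a, ha⟩ := maxclique_nonempty A'
  obtain ⟨w⟩ := hconn.preconnected b a
  exact hFG a ⟨hwalk _ _ w ⟨B, hb, onPath_start⟩, ⟨A', ha, onPath_start⟩⟩

/-- No vertex lies in three distinct neighbors of a max clique. -/
lemma not_mem_three_nbrs [Finite V] (hcf : ClawFree G) (hT : IsCliqueTree G T)
    {B X Y W : MaxClique G} (hXY : X ≠ Y) (hXW : X ≠ W) (hYW : Y ≠ W)
    (hX : T.Adj B X) (hY : T.Adj B Y) (hW : T.Adj B W) {u : V}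
    (huX : u ∈ X.1) (huY : u ∈ Y.1) (huW : u ∈ W.1) : False := by
  have hM := hT.isTree
  have huB : u ∈ B.1 := mem_mid hT hX hY hXY huX huY
  obtain ⟨px, hpxX, hpxB⟩ := maxclique_diff_nonempty hX.ne'
  obtain ⟨py, hpyY, hpyB⟩ := maxclique_diff_nonempty hY.ne'
  obtain ⟨pw, hpwW, hpwB⟩ := maxclique_diff_nonempty hW.ne'
  have hpyX : py ∉ X.1 := fun hh => hpyB (mem_mid hT hX hY hXY hh hpyY)
  have hpwX : pw ∉ X.1 := fun hh => hpwB (mem_mid hT hX hW hXW hh hpwW)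
  have hpwY : pw ∉ Y.1 := fun hh => hpwB (mem_mid hT hY hW hYW hh hpwW)
  have a1 : G.Adj u px := X.2.1 huX hpxX (fun e => hpxB (e ▸ huB))
  have a2 : G.Adj u py := Y.2.1 huY hpyY (fun e => hpyB (e ▸ huB))
  have a3 : G.Adj u pw := W.2.1 huW hpwW (fun e => hpwB (e ▸ huB))
  have n12 : ¬ G.Adj px py := sep_nonadj hT hX.symm hpxX hpyY hpxB hpyX onPath_start
    (onPath_of_mem hM (isPath_triple hY.symm hX hXY.symm) (by simp))
  have n13 : ¬ G.Adj px pw := sep_nonadj hT hX.symm hpxX hpwW hpxB hpwX onPath_start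
    (onPath_of_mem hM (isPath_triple hW.symm hX hXW.symm) (by simp))
  have n23 : ¬ G.Adj py pw := sep_nonadj hT hY.symm hpyY hpwW hpyB hpwY onPath_start
    (onPath_of_mem hM (isPath_triple hW.symm hY hYW.symm) (by simp))
  exact no_claw hcf a1 a2 a3 n12 n13 n23
    (fun e => hpyX (e ▸ hpxX)) (fun e => hpwX (e ▸ hpxX)) (fun e => hpwY (e ▸ hpyY))

/-- If some vertex of `B` lies in both neighbors `X, Y`, then every vertex of `B` lies in
`X` or in `Y`. -/
lemma shared_pair_spread [Finite V] (hcf : ClawFree G) (hT : IsCliqueTree G T)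
    {B X Y : MaxClique G} (hXY : X ≠ Y) (hX : T.Adj B X) (hY : T.Adj B Y)
    {w : V} (hwB : w ∈ B.1) (hwX : w ∈ X.1) (hwY : w ∈ Y.1)
    {u : V} (hu : u ∈ B.1) : u ∈ X.1 ∨ u ∈ Y.1 := by
  have hM := hT.isTree
  by_contra hcon
  push_neg at hcon
  obtain ⟨huX, huY⟩ := hcon
  obtain ⟨px, hpxX, hpxB⟩ := maxclique_diff_nonempty hX.ne'
  obtain ⟨py, hpyY, hpyB⟩ := maxclique_diff_nonempty hY.ne'
  have hpyX : py ∉ X.1 := fun hh => hpyB (mem_mid hT hX hY hXY hh hpyY)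
  have a1 : G.Adj w px := X.2.1 hwX hpxX (fun e => hpxB (e ▸ hwB))
  have a2 : G.Adj w py := Y.2.1 hwY hpyY (fun e => hpyB (e ▸ hwB))
  have a3 : G.Adj w u := B.2.1 hwB hu (fun e => huX (e ▸ hwX))
  have n12 : ¬ G.Adj px py := sep_nonadj hT hX.symm hpxX hpyY hpxB hpyX onPath_start
    (onPath_of_mem hM (isPath_triple hY.symm hX hXY.symm) (by simp))
  have n13 : ¬ G.Adj px u := sep_nonadj hT hX.symm hpxX hu hpxB huX onPath_start onPath_start
  have n23 : ¬ G.Adj py u := sep_nonadj hT hY.symm hpyY hu hpyB huY onPath_start onPath_start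
  exact no_claw hcf a1 a2 a3 n12 n13 n23
    (fun e => hpyX (e ▸ hpxX)) (fun e => hpxB (by rw [e]; exact hu))
    (fun e => hpyB (by rw [e]; exact hu))

end Aux2

section Aux3

open SimpleGraph Walk

variable {V : Type*} [Fintype V] [Nonempty V] {G : SimpleGraph V} {T : SimpleGraph (MaxClique G)}

/-- Core step: a vertex of `B` lying in two neighbors `X, Y` of `B` cannot lie in a clique
`Z ≠ B` adjacent to `X`.  (Context: `B` has the three distinct neighbors `X, Y, W`, and every
vertex of `B` lies in exactly two of them, all pairs being realized.) -/
lemma zcon (hconn : G.Connected) (hcf : ClawFree G) (hT : IsCliqueTree G T)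
    {B X Y W Z : MaxClique G}
    (hXY : X ≠ Y) (hXW : X ≠ W) (hYW : Y ≠ W)
    (haX : T.Adj B X) (haY : T.Adj B Y) (haW : T.Adj B W)
    (hpart : ∀ t ∈ B.1, (t ∈ X.1 ∧ t ∈ Y.1 ∧ t ∉ W.1) ∨ (t ∈ X.1 ∧ t ∈ W.1 ∧ t ∉ Y.1) ∨
      (t ∈ Y.1 ∧ t ∈ W.1 ∧ t ∉ X.1))
    (heXW : ∃ s, s ∈ B.1 ∧ s ∈ X.1 ∧ s ∈ W.1) (heYW : ∃ s, s ∈ B.1 ∧ s ∈ Y.1 ∧ s ∈ W.1)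
    (hZX : T.Adj X Z) (hZB : Z ≠ B) {u : V}
    (huB : u ∈ B.1) (huX : u ∈ X.1) (huY : u ∈ Y.1) (huZ : u ∈ Z.1) : False := by
  have hM := hT.isTree
  have hZY : Z ≠ Y := fun e => tree_no_triangle hM haX hZX (by rw [e]; exact haY)
  have hZW : Z ≠ W := fun e => tree_no_triangle hM haX hZX (by rw [e]; exact haW)
  have hpBXZ := isPath_triple haX hZX hZB.symm
  have onBXZ : OnPath T X B Z := onPath_of_mem hM hpBXZ (by simp)
  have hBZtoX : ∀ t : V, t ∈ B.1 → t ∈ Z.1 → t ∈ X.1 := fun t h1 h2 =>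
    mem_of_mem_path hT h1 h2 hpBXZ X (by simp)
  obtain ⟨z, hzZ, hzX⟩ := maxclique_diff_nonempty hZX.ne'
  have hzB : z ∉ B.1 := fun h => hzX (hBZtoX z h hzZ)
  obtain ⟨s, hsB, hsY, hsW⟩ := heYW
  have hsX : s ∉ X.1 := by
    rcases hpart s hsB with ⟨-, -, hn⟩ | ⟨-, -, hn⟩ | ⟨-, -, hn⟩
    · exact absurd hsW hn
    · exact absurd hsY hn
    · exact hn
  have hsZ : s ∉ Z.1 := fun h => hsX (hBZtoX s hsB h)
  have huW : u ∉ W.1 := by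
    rcases hpart u huB with ⟨-, -, hn⟩ | ⟨-, -, hn⟩ | ⟨-, -, hn⟩
    · exact hn
    · exact absurd huY hn
    · exact absurd huX hn
  have a_uz : G.Adj u z := Z.2.1 huZ hzZ (fun e => hzB (by rw [← e]; exact huB))
  by_cases hq : ∃ q, q ∈ X.1 ∧ q ∉ B.1 ∧ q ∉ Z.1
  · obtain ⟨q, hqX, hqB, hqZ⟩ := hq
    have a1 : G.Adj u s := B.2.1 huB hsB (fun e => hsX (by rw [← e]; exact huX))
    have a2 : G.Adj u q := X.2.1 huX hqX (fun e => hqB (by rw [← e]; exact huB))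
    have n_sq : ¬ G.Adj s q :=
      sep_nonadj hT haX hsB hqX hsX hqB onPath_start onPath_start
    have n_sz : ¬ G.Adj s z :=
      sep_nonadj hT hZX hsB hzZ hsZ hzX onBXZ onPath_start
    have n_qz : ¬ G.Adj q z :=
      sep_nonadj hT hZX hqX hzZ hqZ hzX onPath_start onPath_start
    exact no_claw hcf a1 a2 a_uz n_sq n_sz n_qz
      (fun e => hqB (by rw [← e]; exact hsB)) (fun e => hzB (by rw [← e]; exact hsB))
      (fun e => hqZ (by rw [e]; exact hzZ))
  · push_neg at hq
    obtain ⟨py, hpyY, hpyB⟩ := maxclique_diff_nonempty haY.ne'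
    obtain ⟨pw, hpwW, hpwB⟩ := maxclique_diff_nonempty haW.ne'
    have p4Y := isPath_quad haY.symm haX hZX hXY.symm hZY.symm hZB.symm
    have onXYZ : OnPath T X Y Z := onPath_of_mem hM p4Y (by simp)
    have hpyZ : py ∉ Z.1 := fun h => hpyB (mem_of_mem_path hT hpyY h p4Y B (by simp))
    have p4W := isPath_quad haW.symm haX hZX hXW.symm hZW.symm hZB.symm
    have onXWZ : OnPath T X W Z := onPath_of_mem hM p4W (by simp)
    have hpwZ : pw ∉ Z.1 := fun h => hpwB (mem_of_mem_path hT hpwW h p4W B (by simp))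
    have step1 : ∀ t : V, t ∈ B.1 → t ∈ X.1 → t ∈ W.1 → t ∈ Z.1 := by
      intro t htB htX htW
      by_contra htZ
      have htY : t ∉ Y.1 := by
        rcases hpart t htB with ⟨-, -, hn⟩ | ⟨-, -, hn⟩ | ⟨-, -, hn⟩
        · exact absurd htW hn
        · exact hn
        · exact absurd htX hn
      have a2 : G.Adj u py := Y.2.1 huY hpyY (fun e => hpyB (by rw [← e]; exact huB))
      have a3 : G.Adj u t := B.2.1 huB htB (fun e => huW (by rw [e]; exact htW))
      have n_zpy : ¬ G.Adj z py := fun h =>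
        (sep_nonadj hT hZX hpyY hzZ hpyZ hzX onXYZ onPath_start) h.symm
      have n_zt : ¬ G.Adj z t := fun h =>
        (sep_nonadj hT hZX htB hzZ htZ hzX onBXZ onPath_start) h.symm
      have n_pyt : ¬ G.Adj py t := fun h =>
        (sep_nonadj hT haY htB hpyY htY hpyB onPath_start onPath_start) h.symm
      exact no_claw hcf a_uz a2 a3 n_zpy n_zt n_pyt
        (fun e => hpyZ (by rw [← e]; exact hzZ)) (fun e => hzB (by rw [e]; exact htB))
        (fun e => hpyB (by rw [e]; exact htB))
    obtain ⟨t0, ht0B, ht0X, ht0W⟩ := heXW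
    have ht0Z := step1 t0 ht0B ht0X ht0W
    have step2 : ∀ x' : V, x' ∈ B.1 → x' ∈ X.1 → x' ∈ Y.1 → x' ∈ Z.1 := by
      intro x' hB' hX' hY'
      by_contra hZ'
      have hW' : x' ∉ W.1 := by
        rcases hpart x' hB' with ⟨-, -, hn⟩ | ⟨-, -, hn⟩ | ⟨-, -, hn⟩
        · exact hn
        · exact absurd hY' hn
        · exact absurd hX' hn
      have a1 : G.Adj t0 z := Z.2.1 ht0Z hzZ (fun e => hzB (by rw [← e]; exact ht0B))
      have a2 : G.Adj t0 pw := W.2.1 ht0W hpwW (fun e => hpwB (by rw [← e]; exact ht0B))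
      have a3 : G.Adj t0 x' := B.2.1 ht0B hB' (fun e => hZ' (by rw [← e]; exact ht0Z))
      have n_zpw : ¬ G.Adj z pw := fun h =>
        (sep_nonadj hT hZX hpwW hzZ hpwZ hzX onXWZ onPath_start) h.symm
      have n_zx' : ¬ G.Adj z x' := fun h =>
        (sep_nonadj hT hZX hB' hzZ hZ' hzX onBXZ onPath_start) h.symm
      have n_pwx' : ¬ G.Adj pw x' := fun h =>
        (sep_nonadj hT haW hB' hpwW hW' hpwB onPath_start onPath_start) h.symm
      exact no_claw hcf a1 a2 a3 n_zpw n_zx' n_pwx'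
        (fun e => hpwZ (by rw [← e]; exact hzZ)) (fun e => hzB (by rw [e]; exact hB'))
        (fun e => hpwB (by rw [e]; exact hB'))
    have hsub : X.1 ⊆ Z.1 := by
      intro q hqX
      by_cases hqB : q ∈ B.1
      · rcases hpart q hqB with ⟨h1, h2, -⟩ | ⟨h1, h2, -⟩ | ⟨-, -, hn⟩
        · exact step2 q hqB h1 h2
        · exact step1 q hqB h1 h2
        · exact absurd hqX hn
      · exact hq q hqX hqB
    exact hZX.ne (maxclique_eq_of_subset hsub)

/-- In the fork situation, `M_u = {B, X, Y}` exactly. -/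
lemma exact_pair (hconn : G.Connected) (hcf : ClawFree G) (hT : IsCliqueTree G T)
    {B X Y W : MaxClique G}
    (hXY : X ≠ Y) (hXW : X ≠ W) (hYW : Y ≠ W)
    (haX : T.Adj B X) (haY : T.Adj B Y) (haW : T.Adj B W)
    (hnbr : T.neighborSet B = {X, Y, W})
    (hpart : ∀ t ∈ B.1, (t ∈ X.1 ∧ t ∈ Y.1 ∧ t ∉ W.1) ∨ (t ∈ X.1 ∧ t ∈ W.1 ∧ t ∉ Y.1) ∨
      (t ∈ Y.1 ∧ t ∈ W.1 ∧ t ∉ X.1))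
    (heXW : ∃ s, s ∈ B.1 ∧ s ∈ X.1 ∧ s ∈ W.1) (heYW : ∃ s, s ∈ B.1 ∧ s ∈ Y.1 ∧ s ∈ W.1)
    {u : V} (huB : u ∈ B.1) (huX : u ∈ X.1) (huY : u ∈ Y.1) :
    cliquesOf G u = {B, X, Y} := by
  have hM := hT.isTree
  ext C
  simp only [cliquesOf, Set.mem_setOf_eq, Set.mem_insert_iff, Set.mem_singleton_iff]
  constructor
  · intro hC
    obtain ⟨p, hp⟩ := exists_tpath hM B C
    have hsupp := mem_of_mem_path hT huB hC hp
    cases p with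
    | nil => exact Or.inl rfl
    | @cons _ S _ hBS q =>
      have hSmem : S ∈ ({X, Y, W} : Set (MaxClique G)) := by
        rw [← hnbr]; exact hBS
      have huS : u ∈ S.1 := hsupp S (by simp)
      have hq : q.IsPath := hp.of_cons
      have hndB : B ∉ q.support := ((Walk.cons_isPath_iff _ _).1 hp).2
      rcases hSmem with hS | hS | hS
      · -- S = X
        cases q with
        | nil => exact Or.inr (Or.inl hS)
        | @cons _ Z2 _ hXZ q2 =>
          have huZ2 : u ∈ Z2.1 := hsupp Z2 (by simp)
          have hZ2B : Z2 ≠ B := fun e => hndB (by rw [← e]; simp)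
          exact (zcon hconn hcf hT hXY hXW hYW haX haY haW hpart heXW heYW (hS ▸ hXZ) hZ2B
            huB huX huY huZ2).elim
      · -- S = Y
        cases q with
        | nil => exact Or.inr (Or.inr hS)
        | @cons _ Z2 _ hYZ q2 =>
          have huZ2 : u ∈ Z2.1 := hsupp Z2 (by simp)
          have hZ2B : Z2 ≠ B := fun e => hndB (by rw [← e]; simp)
          have hpart' : ∀ t ∈ B.1, (t ∈ Y.1 ∧ t ∈ X.1 ∧ t ∉ W.1) ∨
              (t ∈ Y.1 ∧ t ∈ W.1 ∧ t ∉ X.1) ∨ (t ∈ X.1 ∧ t ∈ W.1 ∧ t ∉ Y.1) := by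
            intro t ht
            rcases hpart t ht with ⟨h1, h2, h3⟩ | ⟨h1, h2, h3⟩ | ⟨h1, h2, h3⟩ <;> tauto
          exact (zcon hconn hcf hT hXY.symm hYW hXW haY haX haW hpart' heYW heXW (hS ▸ hYZ)
            hZ2B huB huY huX huZ2).elim
      · -- S = W : impossible since u would lie in all three neighbors
        exfalso
        have huW : u ∈ W.1 := hS ▸ huS
        rcases hpart u huB with ⟨-, -, hn⟩ | ⟨-, -, hn⟩ | ⟨-, -, hn⟩
        · exact hn huW
        · exact hn huY
        · exact hn huX
  · rintro (rfl | rfl | rfl) <;> assumption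

/-- **Key Lemma.** If a max clique `B` has (at least) three distinct neighbors in the clique
tree, two of which share a vertex, then `B` is a fork clique. -/
lemma key_fork (hconn : G.Connected) (hcf : ClawFree G) (hT : IsCliqueTree G T)
    {B A1 A2 A3 : MaxClique G} (h12 : A1 ≠ A2) (h13 : A1 ≠ A3) (h23 : A2 ≠ A3)
    (ha1 : T.Adj B A1) (ha2 : T.Adj B A2) (ha3 : T.Adj B A3)
    {v : V} (hv1 : v ∈ A1.1) (hv2 : v ∈ A2.1) : IsForkClique G T B := by
  have hM := hT.isTree
  have hvB : v ∈ B.1 := mem_mid hT ha1 ha2 h12 hv1 hv2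
  -- all three pairs of neighbors share a vertex with B
  obtain ⟨w3, hw3B, hw3A3⟩ := adj_inter_nonempty hconn hT ha3
  have he23 : ∃ s, s ∈ B.1 ∧ s ∈ A2.1 ∧ s ∈ A3.1 := by
    rcases shared_pair_spread hcf hT h12 ha1 ha2 hvB hv1 hv2 hw3B with h | h
    · -- w3 ∈ A1 : we have a 1-3 pair
      by_contra he
      push_neg at he
      have hsub : B.1 ⊆ A1.1 := by
        intro u hu
        rcases shared_pair_spread hcf hT h12 ha1 ha2 hvB hv1 hv2 hu with h' | h'
        · exact h'
        · rcases shared_pair_spread hcf hT h13 ha1 ha3 hw3B h hw3A3 hu with h'' | h''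
          · exact h''
          · exact absurd h'' (he u hu h')
      exact ha1.ne (maxclique_eq_of_subset hsub)
    · exact ⟨w3, hw3B, h, hw3A3⟩
  have he13 : ∃ s, s ∈ B.1 ∧ s ∈ A1.1 ∧ s ∈ A3.1 := by
    obtain ⟨s2, hs2B, hs2A2, hs2A3⟩ := he23
    by_contra he
    push_neg at he
    have hsub : B.1 ⊆ A2.1 := by
      intro u hu
      rcases shared_pair_spread hcf hT h12 ha1 ha2 hvB hv1 hv2 hu with h' | h'
      · rcases shared_pair_spread hcf hT h23 ha2 ha3 hs2B hs2A2 hs2A3 hu with h'' | h''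
        · exact h''
        · exact absurd h'' (he u hu h')
      · exact h'
    exact ha2.ne (maxclique_eq_of_subset hsub)
  have he12 : ∃ s, s ∈ B.1 ∧ s ∈ A1.1 ∧ s ∈ A2.1 := ⟨v, hvB, hv1, hv2⟩
  -- partition of the vertices of B
  have hpart : ∀ t ∈ B.1, (t ∈ A1.1 ∧ t ∈ A2.1 ∧ t ∉ A3.1) ∨
      (t ∈ A1.1 ∧ t ∈ A3.1 ∧ t ∉ A2.1) ∨ (t ∈ A2.1 ∧ t ∈ A3.1 ∧ t ∉ A1.1) := by
    intro t ht
    have t12 := shared_pair_spread hcf hT h12 ha1 ha2 hvB hv1 hv2 ht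
    obtain ⟨s3, hs3B, hs3A1, hs3A3⟩ := he13
    obtain ⟨s2, hs2B, hs2A2, hs2A3⟩ := he23
    have t13 := shared_pair_spread hcf hT h13 ha1 ha3 hs3B hs3A1 hs3A3 ht
    have t23 := shared_pair_spread hcf hT h23 ha2 ha3 hs2B hs2A2 hs2A3 ht
    have t0 : ¬(t ∈ A1.1 ∧ t ∈ A2.1 ∧ t ∈ A3.1) := by
      rintro ⟨u1, u2, u3⟩
      exact not_mem_three_nbrs hcf hT h12 h13 h23 ha1 ha2 ha3 u1 u2 u3
    tauto
  -- the neighbor set is exactly {A1, A2, A3}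
  have hnbr : T.neighborSet B = {A1, A2, A3} := by
    ext A4
    simp only [SimpleGraph.mem_neighborSet, Set.mem_insert_iff, Set.mem_singleton_iff]
    constructor
    · intro hadj4
      by_contra hno
      push_neg at hno
      obtain ⟨hn1, hn2, hn3⟩ := hno
      obtain ⟨w4, hw4B, hw4A4⟩ := adj_inter_nonempty hconn hT hadj4
      rcases hpart w4 hw4B with ⟨h1, h2, -⟩ | ⟨h1, h2, -⟩ | ⟨h1, h2, -⟩
      · exact not_mem_three_nbrs hcf hT h12 (Ne.symm hn1) (Ne.symm hn2) ha1 ha2 hadj4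
          h1 h2 hw4A4
      · exact not_mem_three_nbrs hcf hT h13 (Ne.symm hn1) (Ne.symm hn3) ha1 ha3 hadj4
          h1 h2 hw4A4
      · exact not_mem_three_nbrs hcf hT h23 (Ne.symm hn2) (Ne.symm hn3) ha2 ha3 hadj4
          h1 h2 hw4A4
    · rintro (rfl | rfl | rfl) <;> assumption
  -- the three instances of exactness
  have E12 : ∀ u : V, u ∈ B.1 → u ∈ A1.1 → u ∈ A2.1 → cliquesOf G u = {B, A1, A2} :=
    fun u h1 h2 h3 => exact_pair hconn hcf hT h12 h13 h23 ha1 ha2 ha3 hnbr hpart he13 he23 h1 h2 h3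
  have E13 : ∀ u : V, u ∈ B.1 → u ∈ A1.1 → u ∈ A3.1 → cliquesOf G u = {B, A1, A3} := by
    intro u h1 h2 h3
    have hnbr' : T.neighborSet B = {A1, A3, A2} := by
      rw [hnbr]; ext x; simp only [Set.mem_insert_iff, Set.mem_singleton_iff]; tauto
    have hpart' : ∀ t ∈ B.1, (t ∈ A1.1 ∧ t ∈ A3.1 ∧ t ∉ A2.1) ∨
        (t ∈ A1.1 ∧ t ∈ A2.1 ∧ t ∉ A3.1) ∨ (t ∈ A3.1 ∧ t ∈ A2.1 ∧ t ∉ A1.1) := by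
      intro t ht; rcases hpart t ht with ⟨x1, x2, x3⟩ | ⟨x1, x2, x3⟩ | ⟨x1, x2, x3⟩ <;> tauto
    have he23' : ∃ s, s ∈ B.1 ∧ s ∈ A3.1 ∧ s ∈ A2.1 := by
      obtain ⟨s, hs1, hs2, hs3⟩ := he23; exact ⟨s, hs1, hs3, hs2⟩
    exact exact_pair hconn hcf hT h13 h12 (Ne.symm h23) ha1 ha3 ha2 hnbr' hpart' he12 he23' h1 h2 h3
  have E23 : ∀ u : V, u ∈ B.1 → u ∈ A2.1 → u ∈ A3.1 → cliquesOf G u = {B, A2, A3} := by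
    intro u h1 h2 h3
    have hnbr' : T.neighborSet B = {A2, A3, A1} := by
      rw [hnbr]; ext x; simp only [Set.mem_insert_iff, Set.mem_singleton_iff]; tauto
    have hpart' : ∀ t ∈ B.1, (t ∈ A2.1 ∧ t ∈ A3.1 ∧ t ∉ A1.1) ∨
        (t ∈ A2.1 ∧ t ∈ A1.1 ∧ t ∉ A3.1) ∨ (t ∈ A3.1 ∧ t ∈ A1.1 ∧ t ∉ A2.1) := by
      intro t ht; rcases hpart t ht with ⟨x1, x2, x3⟩ | ⟨x1, x2, x3⟩ | ⟨x1, x2, x3⟩ <;> tauto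
    have he12' : ∃ s, s ∈ B.1 ∧ s ∈ A2.1 ∧ s ∈ A1.1 := by
      obtain ⟨s, hs1, hs2, hs3⟩ := he12; exact ⟨s, hs1, hs3, hs2⟩
    have he13' : ∃ s, s ∈ B.1 ∧ s ∈ A3.1 ∧ s ∈ A1.1 := by
      obtain ⟨s, hs1, hs2, hs3⟩ := he13; exact ⟨s, hs1, hs3, hs2⟩
    exact exact_pair hconn hcf hT h23 (Ne.symm h12) (Ne.symm h13) ha2 ha3 ha1 hnbr' hpart'
      he12' he13' h1 h2 h3
  refine ⟨?_, ?_, ?_⟩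
  · rw [hnbr]
    exact Set.ncard_eq_three.2 ⟨A1, A2, A3, h12, h13, h23, rfl⟩
  · intro u hu
    rcases hpart u hu with ⟨h1, h2, -⟩ | ⟨h1, h2, -⟩ | ⟨h1, h2, -⟩
    · exact ⟨A1, A2, h12, ha1, ha2, E12 u hu h1 h2⟩
    · exact ⟨A1, A3, h13, ha1, ha3, E13 u hu h1 h2⟩
    · exact ⟨A2, A3, h23, ha2, ha3, E23 u hu h1 h2⟩
  · intro P Q hP hQ hPQ
    have hPm : P = A1 ∨ P = A2 ∨ P = A3 := by
      have : P ∈ T.neighborSet B := hP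
      rw [hnbr] at this
      simpa using this
    have hQm : Q = A1 ∨ Q = A2 ∨ Q = A3 := by
      have : Q ∈ T.neighborSet B := hQ
      rw [hnbr] at this
      simpa using this
    have swap12 : ({B, A2, A1} : Set (MaxClique G)) = {B, A1, A2} :=
      congrArg (insert B) (Set.pair_comm _ _)
    have swap13 : ({B, A3, A1} : Set (MaxClique G)) = {B, A1, A3} :=
      congrArg (insert B) (Set.pair_comm _ _)
    have swap23 : ({B, A3, A2} : Set (MaxClique G)) = {B, A2, A3} :=
      congrArg (insert B) (Set.pair_comm _ _)
    obtain ⟨s12, hs1, hs2, hs3⟩ := he12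
    obtain ⟨s13, ht1, ht2, ht3⟩ := he13
    obtain ⟨s23, hu1, hu2, hu3⟩ := he23
    rcases hPm with rfl | rfl | rfl <;> rcases hQm with rfl | rfl | rfl
    · exact absurd rfl hPQ
    · exact ⟨s12, E12 s12 hs1 hs2 hs3⟩
    · exact ⟨s13, E13 s13 ht1 ht2 ht3⟩
    · exact ⟨s12, by rw [E12 s12 hs1 hs2 hs3, ← swap12]⟩
    · exact absurd rfl hPQ
    · exact ⟨s23, E23 s23 hu1 hu2 hu3⟩
    · exact ⟨s13, by rw [E13 s13 ht1 ht2 ht3, ← swap13]⟩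
    · exact ⟨s23, by rw [E23 s23 hu1 hu2 hu3, ← swap23]⟩
    · exact absurd rfl hPQ

end Aux3

section Aux4

open SimpleGraph Walk

variable {V : Type*} [Fintype V] [Nonempty V] {G : SimpleGraph V} {T : SimpleGraph (MaxClique G)}

lemma pigeon3 {α : Type*} {a b c y1 y2 : α} (ha : a = y1 ∨ a = y2) (hb : b = y1 ∨ b = y2)
    (hc : c = y1 ∨ c = y2) (hab : a ≠ b) (hac : a ≠ c) : b = c := by
  rcases ha with rfl | rfl <;> rcases hb with rfl | rfl <;> rcases hc with rfl | rfl <;>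
    first | rfl | (exact absurd rfl hab) | (exact absurd rfl hac)

lemma leaf_eq {R a b : MaxClique G} (hR : IsLeaf T R) (ha : T.Adj R a) (hb : T.Adj R b) :
    a = b := by
  obtain ⟨c, hc⟩ := Set.ncard_eq_one.1 hR
  have h1 : a ∈ T.neighborSet R := ha
  have h2 : b ∈ T.neighborSet R := hb
  rw [hc] at h1 h2
  rw [Set.mem_singleton_iff] at h1 h2
  rw [h1, h2]

/-- Climbing lemma: the situation where the path in `M_v` from `A` first goes to the parent
and then to the grandparent is impossible. -/
lemma climb (hconn : G.Connected) (hcf : ClawFree G) (hT : IsCliqueTree G T)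
    {R : MaxClique G} (hR : IsLeaf T R) {v : V} {A : MaxClique G} (hv : v ∈ A.1) :
    ∀ (Yc D : MaxClique G) (r : T.Walk Yc D), r.IsPath → v ∈ Yc.1 → v ∈ D.1 →
      ¬ IsAncestor T R A D → ∀ prev : MaxClique G, IsChildOf T R prev Yc → v ∈ prev.1 →
      prev ∉ r.support → A ∉ r.support → A ≠ prev → IsAncestor T R A Yc → False := by
  have hM := hT.isTree
  intro Yc D r
  induction r with
  | nil =>
    intro _ _ _ hAnc _ _ _ _ _ _ hanc
    exact hAnc hanc
  | @cons Y Z D' h r' ih =>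
    intro hp hvY hvD hAnc prev hprev hvprev hprevmem hAmem hAprev hancY
    have hZmem : Z ∈ (Walk.cons h r').support := by
      rw [Walk.support_cons]
      exact List.mem_cons_of_mem _ r'.start_mem_support
    have hvZ : v ∈ Z.1 := mem_of_mem_path hT hvY hvD hp Z hZmem
    have hr' : r'.IsPath := hp.of_cons
    have hAY : A ≠ Y := fun e => hAmem (by rw [e]; exact (Walk.cons h r').start_mem_support)
    rcases adj_dichot hM R h with hZchild | hYchild
    · -- Z is a child of Y : the path turns, Y is a fork, contradiction
      have hprevZ : prev ≠ Z := fun e => hprevmem (by rw [e]; exact hZmem)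
      have hYR : Y ≠ R := by
        rintro rfl
        exact hprevZ (leaf_eq hR hprev.1 h)
      obtain ⟨Q, hQ⟩ := exists_parent hM hYR
      have hQprev : Q ≠ prev := fun e =>
        hprev.1.ne (isAncestor_antisymm hM (by rw [← e]; exact hQ.2) hprev.2)
      have hQZ : Q ≠ Z := fun e =>
        h.ne (isAncestor_antisymm hM (by rw [← e]; exact hQ.2) hZchild)
      have hfork := key_fork hconn hcf hT hprevZ (Ne.symm hQprev) (Ne.symm hQZ)
        hprev.1 h hQ.1.symm hvprev hvZ
      obtain ⟨Y1, Y2, hY12, hadj1, hadj2, hMv⟩ := hfork.2.1 v hvY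
      have hmem : ∀ X : MaxClique G, v ∈ X.1 → X ≠ Y → X = Y1 ∨ X = Y2 := by
        intro X hX hXY
        have hXin : X ∈ ({Y, Y1, Y2} : Set (MaxClique G)) := by
          rw [← hMv]; exact hX
        simpa [hXY] using hXin
      have mprev := hmem prev hvprev hprev.1.ne'
      have mZ := hmem Z hvZ h.ne'
      have mA := hmem A hv hAY
      exact hprevZ (pigeon3 mA mprev mZ hAprev
        (fun e => hAmem (by rw [e]; exact hZmem)))
    · -- Y is a child of Z : keep climbing
      have hYprev' : Y ∉ r'.support := ((Walk.cons_isPath_iff _ _).1 hp).2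
      have hAmem' : A ∉ r'.support := fun hh => hAmem (by
        rw [Walk.support_cons]; exact List.mem_cons_of_mem _ hh)
      exact ih hr' hvZ hvD hAnc Y ⟨h.symm, hYchild⟩ hvY hYprev' hAmem' hAY
        (isAncestor_trans hM hancY hYchild)

end Aux4

/-- Let `G` be a connected chordal claw-free graph with clique
tree `T` rooted at a leaf `R`.  Let `A` be a max clique that is not a fork
clique and `v ∈ A`.  Suppose there is a max clique `D` with `v ∈ D`, `D ≠ A`
and `A` not a proper descendant of `D`.  Then there is exactly one max clique
`C` with `v ∈ C` such that `C` is a child of `A`, or `C` and `A` are the two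
children of a common parent which is a fork clique. -/
theorem unique_previous_clique {V : Type*} [Fintype V] [Nonempty V]
    (G : SimpleGraph V) (hconn : G.Connected) (hch : IsChordal G)
    (hcf : ClawFree G) (T : SimpleGraph (MaxClique G)) (hT : IsCliqueTree G T)
    (R : MaxClique G) (hR : IsLeaf T R) (A : MaxClique G)
    (hnf : ¬ IsForkClique G T A) (v : V) (hv : v ∈ A.1)
    (hD : ∃ D : MaxClique G, v ∈ D.1 ∧ D ≠ A ∧ ¬ (IsAncestor T R A D ∧ A ≠ D)) :
    ∃! C : MaxClique G, v ∈ C.1 ∧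
      (IsChildOf T R C A ∨
        (C ≠ A ∧ ∃ P : MaxClique G, IsChildOf T R C P ∧ IsChildOf T R A P ∧
          IsForkClique G T P)) := by
  classical
  have hM := hT.isTree
  obtain ⟨D, hvD, hDA, hnot⟩ := hD
  have hAnc : ¬ IsAncestor T R A D := fun h => hnot ⟨h, fun e => hDA e.symm⟩
  -- uniqueness
  have huniq : ∀ C₁ C₂ : MaxClique G,
      (v ∈ C₁.1 ∧ (IsChildOf T R C₁ A ∨ (C₁ ≠ A ∧ ∃ P : MaxClique G,
        IsChildOf T R C₁ P ∧ IsChildOf T R A P ∧ IsForkClique G T P))) →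
      (v ∈ C₂.1 ∧ (IsChildOf T R C₂ A ∨ (C₂ ≠ A ∧ ∃ P : MaxClique G,
        IsChildOf T R C₂ P ∧ IsChildOf T R A P ∧ IsForkClique G T P))) → C₁ = C₂ := by
    have hsib : ∀ C₁ C₂ : MaxClique G, v ∈ C₁.1 → v ∈ C₂.1 → IsChildOf T R C₁ A →
        C₂ ≠ A → ∀ P : MaxClique G, IsChildOf T R C₂ P → IsChildOf T R A P →
        IsForkClique G T P → C₁ = C₂ := by
      intro C₁ C₂ hv1 hv2 h1 hne2 P hc2 hA2 hf2
      have hvP : v ∈ P.1 := mem_of_mem_path hT hv2 hv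
        (isPath_triple hc2.1.symm hA2.1 hne2) P (by simp)
      obtain ⟨Y1, Y2, hY12, hadj1, hadj2, hMv⟩ := hf2.2.1 v hvP
      have hmem : ∀ X : MaxClique G, v ∈ X.1 → X ≠ P → X = Y1 ∨ X = Y2 := by
        intro X hX hXP
        have hXin : X ∈ ({P, Y1, Y2} : Set (MaxClique G)) := by rw [← hMv]; exact hX
        simpa [hXP] using hXin
      have m1 : C₁ = Y1 ∨ C₁ = Y2 := hmem C₁ hv1
        (fun e => h1.1.ne' (isAncestor_antisymm hM h1.2 (by rw [e]; exact hA2.2)))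
      have m2 : C₂ = Y1 ∨ C₂ = Y2 := hmem C₂ hv2 hc2.1.ne'
      have mA : A = Y1 ∨ A = Y2 := hmem A hv hA2.1.ne'
      exact pigeon3 mA m1 m2 h1.1.ne (Ne.symm hne2)
    rintro C₁ C₂ ⟨hv1, h1 | ⟨hne1, P1, hc1, hA1, hf1⟩⟩ ⟨hv2, h2 | ⟨hne2, P2, hc2, hA2, hf2⟩⟩
    · -- both children of A
      by_contra hne
      have hAR : A ≠ R := by
        rintro rfl
        exact hne (leaf_eq hR h1.1 h2.1)
      obtain ⟨W, hW⟩ := exists_parent hM hAR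
      have hW1 : W ≠ C₁ := fun e =>
        h1.1.ne' (isAncestor_antisymm hM h1.2 (by rw [← e]; exact hW.2))
      have hW2 : W ≠ C₂ := fun e =>
        h2.1.ne' (isAncestor_antisymm hM h2.2 (by rw [← e]; exact hW.2))
      exact hnf (key_fork hconn hcf hT hne (Ne.symm hW1) (Ne.symm hW2)
        h1.1 h2.1 hW.1.symm hv1 hv2)
    · exact hsib C₁ C₂ hv1 hv2 h1 hne2 P2 hc2 hA2 hf2
    · exact (hsib C₂ C₁ hv2 hv1 h2 hne1 P1 hc1 hA1 hf1).symm
    · -- both siblings under a fork parent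
      have hPP : P1 = P2 := parent_unique hM hA1 hA2
      subst hPP
      have hvP : v ∈ P1.1 := mem_of_mem_path hT hv1 hv
        (isPath_triple hc1.1.symm hA1.1 hne1) P1 (by simp)
      obtain ⟨Y1, Y2, hY12, hadj1, hadj2, hMv⟩ := hf1.2.1 v hvP
      have hmem : ∀ X : MaxClique G, v ∈ X.1 → X ≠ P1 → X = Y1 ∨ X = Y2 := by
        intro X hX hXP
        have hXin : X ∈ ({P1, Y1, Y2} : Set (MaxClique G)) := by rw [← hMv]; exact hX
        simpa [hXP] using hXin
      exact pigeon3 (hmem A hv hA1.1.ne') (hmem C₁ hv1 hc1.1.ne') (hmem C₂ hv2 hc2.1.ne')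
        (Ne.symm hne1) (Ne.symm hne2)
  -- existence
  obtain ⟨p, hp⟩ := exists_tpath hM A D
  cases p with
  | nil => exact absurd rfl hDA
  | @cons _ E _ hAE q1 =>
    have hvE : v ∈ E.1 := mem_of_mem_path hT hv hvD hp E (by
      rw [Walk.support_cons]; exact List.mem_cons_of_mem _ q1.start_mem_support)
    rcases adj_dichot hM R hAE with hEchild | hAchild
    · exact ⟨E, ⟨hvE, Or.inl ⟨hAE, hEchild⟩⟩,
        fun C' hC' => huniq C' E hC' ⟨hvE, Or.inl ⟨hAE, hEchild⟩⟩⟩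
    · -- E is the parent of A
      cases q1 with
      | nil => exact absurd hAchild hAnc
      | @cons _ X _ hEX q2 =>
        have hvX : v ∈ X.1 := mem_of_mem_path hT hv hvD hp X (by
          rw [Walk.support_cons, Walk.support_cons]
          exact List.mem_cons_of_mem _ (List.mem_cons_of_mem _ q2.start_mem_support))
        have hnd := hp.support_nodup
        rw [Walk.support_cons, List.nodup_cons] at hnd
        have hAq : A ∉ (Walk.cons hEX q2).support := hnd.1
        have hAX : A ≠ X := fun e => hAq (by
          rw [e, Walk.support_cons]; exact List.mem_cons_of_mem _ q2.start_mem_support)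
        rcases adj_dichot hM R hEX with hXchild | hEchild2
        · -- X is a child of E : sibling case, E is a fork
          have hER : E ≠ R := by
            rintro rfl
            exact hAX (leaf_eq hR hAE.symm hEX)
          obtain ⟨Q, hQ⟩ := exists_parent hM hER
          have hQA : Q ≠ A := fun e =>
            hAE.ne (isAncestor_antisymm hM hAchild (by rw [← e]; exact hQ.2))
          have hQX : Q ≠ X := fun e =>
            hEX.ne (isAncestor_antisymm hM (by rw [← e]; exact hQ.2) hXchild)
          have hfork := key_fork hconn hcf hT hAX (Ne.symm hQA) (Ne.symm hQX)
            hAE.symm hEX hQ.1.symm hv hvX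
          have hpred : v ∈ X.1 ∧ (IsChildOf T R X A ∨ (X ≠ A ∧ ∃ P : MaxClique G,
              IsChildOf T R X P ∧ IsChildOf T R A P ∧ IsForkClique G T P)) :=
            ⟨hvX, Or.inr ⟨Ne.symm hAX, E, ⟨hEX, hXchild⟩, ⟨hAE.symm, hAchild⟩, hfork⟩⟩
          exact ⟨X, hpred, fun C' hC' => huniq C' X hC' hpred⟩
        · -- E's parent is X : impossible by the climbing lemma
          exfalso
          have hq2 : q2.IsPath := hp.of_cons.of_cons
          have hnd2 := hp.of_cons.support_nodup
          rw [Walk.support_cons, List.nodup_cons] at hnd2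
          have hEq2 : E ∉ q2.support := hnd2.1
          have hAq2 : A ∉ q2.support := fun hh => hAq (by
            rw [Walk.support_cons]; exact List.mem_cons_of_mem _ hh)
          exact climb hconn hcf hT hR hv X D q2 hq2 hvX hvD hAnc E
            ⟨hEX.symm, hEchild2⟩ hvE hEq2 hAq2 hAE.ne
            (isAncestor_trans hM hAchild hEchild2)
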